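/- arXiv:2405.03321 — 2 statements merged into one kernel-verified Lean document; each statement's English description precedes it below -/
import Mathlib

section
/- Let G = (V,E) be a connected simple graph and let T = (V,F) be an elimination tree of G whose tree edges are all edges of G, i.e., F ⊆ E. Then the depth of T is at most 2^{td(G)}. -/
/-- A rooted forest on vertex set `V`, given by a parent function (`none` for roots)
together with a depth function counting the number of vertices on the path from a
vertex to its root (so roots have depth `1`). -/
structure RootedForest (V : Type*) where
  parent : V → Option V
  vdepth : V → ℕ
  vdepth_root : ∀ v, parent v = none → vdepth v = 1
  vdepth_parent : ∀ v u, parent v = some u → vdepth v = vdepth u + 1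

namespace RootedForest

variable {V : Type*} (F : RootedForest V)

/-- `u` is an ancestor of `v` in the rooted forest `F`: `u` lies on the path from `v`
to the root of the tree containing `v` (in particular `v` is an ancestor of itself). -/
def Ancestor (u v : V) : Prop :=
  Relation.ReflTransGen (fun a b => F.parent a = some b) v u

/-- The depth of the rooted forest: the maximum number of vertices on a path from a
root to a leaf. -/
noncomputable def depth : ℕ := sSup (Set.range F.vdepth)

end RootedForest

/-- `F` is an elimination forest of the simple graph `G`: for every edge of `G`, one of
its endpoints is an ancestor of the other in `F`. -/
def IsEliminationForest {V : Type*} (G : SimpleGraph V) (F : RootedForest V) : Prop :=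
  ∀ u v, G.Adj u v → F.Ancestor u v ∨ F.Ancestor v u

/-- The treedepth of a simple graph: the minimum depth of an elimination forest. -/
noncomputable def treedepth {V : Type*} (G : SimpleGraph V) : ℕ :=
  sInf {d | ∃ F : RootedForest V, IsEliminationForest G F ∧ F.depth = d}

namespace Aux

variable {V : Type*}

lemma vdepth_pos (F : RootedForest V) (v : V) : 1 ≤ F.vdepth v := by
  cases h : F.parent v with
  | none => rw [F.vdepth_root v h]
  | some u => rw [F.vdepth_parent v u h]; omega

lemma ancestor_vdepth_le {F : RootedForest V} {u v : V} (h : F.Ancestor u v) :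
    F.vdepth u ≤ F.vdepth v := by
  induction h with
  | refl => exact le_rfl
  | tail _ hstep ih =>
    rename_i c u' _
    have := F.vdepth_parent c u' hstep
    omega

lemma ancestor_vdepth_lt {F : RootedForest V} {u v : V} (h : F.Ancestor u v) (hne : u ≠ v) :
    F.vdepth u < F.vdepth v := by
  rcases (Relation.ReflTransGen.cases_head h) with h1 | ⟨c, hc, h2⟩
  · exact absurd h1.symm hne
  · have h3 := F.vdepth_parent v c hc
    have h4 := ancestor_vdepth_le h2
    omega

lemma ancestor_trans {F : RootedForest V} {a b c : V}
    (h1 : F.Ancestor a b) (h2 : F.Ancestor b c) : F.Ancestor a c :=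
  Relation.ReflTransGen.trans h2 h1

lemma ancestor_comparable {F : RootedForest V} :
    ∀ {v a b : V}, F.Ancestor a v → F.Ancestor b v → F.Ancestor a b ∨ F.Ancestor b a := by
  intro v a b ha
  induction ha using Relation.ReflTransGen.head_induction_on with
  | refl => intro hb; exact Or.inr hb
  | head hstep h' ih =>
    rename_i x c
    intro hb
    rcases Relation.ReflTransGen.cases_head hb with h1 | ⟨c', hc', hb'⟩
    · subst h1
      exact Or.inl (Relation.ReflTransGen.head hstep h')
    · rw [hstep] at hc'
      injection hc' with hcc
      subst hcc
      exact ih hb'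

lemma exists_common_ancestor {G : SimpleGraph V} {F : RootedForest V}
    (hElim : IsEliminationForest G F) :
    ∀ l : List V, l ≠ [] → List.Chain' G.Adj l → ∃ a ∈ l, ∀ v ∈ l, F.Ancestor a v := by
  intro l
  induction l with
  | nil => intro h; exact absurd rfl h
  | cons x l ih =>
    intro _ hc
    cases l with
    | nil => exact ⟨x, List.mem_singleton_self x, by intro v hv; simp at hv; subst hv; exact .refl⟩
    | cons y t =>
      change List.IsChain _ _ at hc
      rw [List.isChain_cons_cons] at hc
      obtain ⟨a, hal, ha⟩ := ih (by simp) hc.2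
      have hay : F.Ancestor a y := ha y (by simp)
      rcases hElim x y hc.1 with hxy | hyx
      · rcases ancestor_comparable hay hxy with hax | hxa
        · refine ⟨a, List.mem_cons_of_mem _ hal, ?_⟩
          intro v hv
          rcases List.mem_cons.mp hv with rfl | hv
          · exact hax
          · exact ha v hv
        · refine ⟨x, List.mem_cons_self, ?_⟩
          intro v hv
          rcases List.mem_cons.mp hv with rfl | hv
          · exact .refl
          · exact ancestor_trans hxa (ha v hv)
      · refine ⟨a, List.mem_cons_of_mem _ hal, ?_⟩
        intro v hv
        rcases List.mem_cons.mp hv with rfl | hv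
        · exact ancestor_trans hay hyx
        · exact ha v hv

/-- Key bound: a path in `G` whose vertices have `F'`-depths in a window of size `m`
has fewer than `2^m` vertices. -/
lemma path_bound {G : SimpleGraph V} {F' : RootedForest V}
    (hElim : IsEliminationForest G F') :
    ∀ (m k : ℕ) (l : List V), List.Chain' G.Adj l → l.Nodup →
      (∀ v ∈ l, k ≤ F'.vdepth v ∧ F'.vdepth v < k + m) → l.length < 2 ^ m := by
  intro m
  induction m with
  | zero =>
    intro k l _ _ hb
    cases l with
    | nil => simp
    | cons x t => have := hb x (by simp); omega
  | succ m ih =>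
    intro k l hc hn hb
    rcases eq_or_ne l [] with rfl | hne
    · simp [Nat.pow_pos]
    obtain ⟨a, hal, ha⟩ := exists_common_ancestor hElim l hne hc
    obtain ⟨s, t, rfl⟩ := List.append_of_mem hal
    change List.IsChain _ _ at hc
    rw [List.isChain_append] at hc
    rw [List.nodup_append] at hn
    have hanots : a ∉ s := fun h => hn.2.2 a h a (by simp) rfl
    have hanott : a ∉ t := by
      have := hn.2.1
      rw [List.nodup_cons] at this
      exact this.1
    have hka : k ≤ F'.vdepth a := (hb a (by simp)).1
    have hbound : ∀ u : List V, (∀ v ∈ u, v ∈ s ++ a :: t) → (∀ v ∈ u, v ≠ a) →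
        (∀ v ∈ u, k + 1 ≤ F'.vdepth v ∧ F'.vdepth v < (k + 1) + m) := by
      intro u hu hune v hv
      have hv' := hu v hv
      have h1 := (hb v hv').2
      have h2 := ancestor_vdepth_lt (ha v hv') (Ne.symm (hune v hv))
      omega
    have hs : s.length < 2 ^ m := by
      refine ih (k + 1) s hc.1 hn.1 (hbound s ?_ ?_)
      · intro v hv; exact List.mem_append_left _ hv
      · intro v hv h; exact hanots (h ▸ hv)
    have ht : t.length < 2 ^ m := by
      refine ih (k + 1) t (List.IsChain.tail hc.2.1) (hn.2.1.of_cons) (hbound t ?_ ?_)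
      · intro v hv; exact List.mem_append_right _ (List.mem_cons_of_mem _ hv)
      · intro v hv h; exact hanott (h ▸ hv)
    have : (s ++ a :: t).length = s.length + t.length + 1 := by simp; omega
    have hp : 2 ^ (m + 1) = 2 ^ m + 2 ^ m := by rw [pow_succ]; omega
    omega

/-- A root-to-vertex path in `F` is a nodup `G`-path of length `vdepth v`. -/
lemma chain_list {G : SimpleGraph V} (F : RootedForest V)
    (hSub : ∀ v u : V, F.parent v = some u → G.Adj v u) :
    ∀ (n : ℕ) (v : V), F.vdepth v = n →
      ∃ l' : List V, (v :: l').length = n ∧ List.Chain' G.Adj (v :: l') ∧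
        (v :: l').Nodup ∧ ∀ w ∈ l', F.vdepth w < n := by
  intro n
  induction n with
  | zero => intro v h; have := vdepth_pos F v; omega
  | succ m ih =>
    intro v h
    cases hp : F.parent v with
    | none =>
      have h1 := F.vdepth_root v hp
      have hm : m = 0 := by omega
      subst hm
      exact ⟨[], rfl, List.isChain_singleton v, List.nodup_singleton v, by simp⟩
    | some u =>
      have h1 := F.vdepth_parent v u hp
      have hu : F.vdepth u = m := by omega
      obtain ⟨l', hlen, hch, hnd, hlt⟩ := ih u hu
      refine ⟨u :: l', ?_, ?_, ?_, ?_⟩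
      · simp at hlen ⊢; omega
      · exact List.isChain_cons_cons.mpr ⟨hSub v u hp, hch⟩
      · rw [List.nodup_cons]
        refine ⟨?_, hnd⟩
        intro hv
        rcases List.mem_cons.mp hv with rfl | hv
        · omega
        · have := hlt v hv; omega
      · intro w hw
        rcases List.mem_cons.mp hw with rfl | hw
        · omega
        · have := hlt w hw; omega

end Aux

/-- If `T` is an elimination tree of a connected simple graph `G` all of whose tree
edges are edges of `G`, then the depth of `T` is at most `2 ^ td(G)`. -/
theorem depth_le_two_pow_treedepth {V : Type*} [Finite V]
    (G : SimpleGraph V) (hG : G.Connected)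
    (F : RootedForest V) (hElim : IsEliminationForest G F)
    (hTree : ∃! r : V, F.parent r = none)
    (hSub : ∀ v u : V, F.parent v = some u → G.Adj v u) :
    F.depth ≤ 2 ^ treedepth G := by
  obtain ⟨r, hr, -⟩ := hTree
  have : Nonempty V := ⟨r⟩
  -- an optimal elimination forest
  have hset : {d | ∃ F' : RootedForest V, IsEliminationForest G F' ∧ F'.depth = d}.Nonempty :=
    ⟨F.depth, F, hElim, rfl⟩
  obtain ⟨F', hF'elim, hF'd⟩ := Nat.sInf_mem hset
  -- depth of F is attained
  have hbdd : BddAbove (Set.range F.vdepth) := (Set.finite_range _).bddAbove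
  have hmem : F.depth ∈ Set.range F.vdepth :=
    Nat.sSup_mem (Set.range_nonempty _) hbdd
  obtain ⟨v, hv⟩ := hmem
  obtain ⟨l', hlen, hch, hnd, -⟩ := Aux.chain_list F hSub (F.vdepth v) v rfl
  have hbdd' : BddAbove (Set.range F'.vdepth) := (Set.finite_range _).bddAbove
  have hb : ∀ w ∈ v :: l', 1 ≤ F'.vdepth w ∧ F'.vdepth w < 1 + F'.depth := by
    intro w _
    refine ⟨Aux.vdepth_pos F' w, ?_⟩
    have : F'.vdepth w ≤ F'.depth := le_csSup hbdd' ⟨w, rfl⟩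
    omega
  have hlt := Aux.path_bound hF'elim F'.depth 1 (v :: l') hch hnd hb
  have h2 : (v :: l').length = F.vdepth v := hlen
  rw [hF'd] at hlt
  rw [treedepth]
  omega
end

section
/- Existence of a spanning elimination tree of bounded depth: for every connected simple graph G = (V,E) and every vertex r of G, there exists a spanning tree T = (V,F) of G with F ⊆ E, rooted at r, such that T is an elimination tree of G (every edge of G joins two vertices one of which is an ancestor of the other in T), and the depth of T is at most 2^{td(G)}. -/
section AuxLemmas

set_option linter.unusedSectionVars false

variable {V : Type*}


variable {V : Type*}

lemma RF_one_le_vdepth (F : RootedForest V) (v : V) : 1 ≤ F.vdepth v := by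
  cases h : F.parent v with
  | none => rw [F.vdepth_root v h]
  | some u => rw [F.vdepth_parent v u h]; omega

lemma RF_vdepth_chain (F : RootedForest V) {v u : V}
    (h : Relation.ReflTransGen (fun a b => F.parent a = some b) v u) :
    F.vdepth u ≤ F.vdepth v ∧ (u = v ∨ F.vdepth u < F.vdepth v) := by
  induction h with
  | refl => exact ⟨le_rfl, Or.inl rfl⟩
  | tail hb hstep ih =>
    obtain ⟨h1, _⟩ := ih
    have h2 := F.vdepth_parent _ _ hstep
    exact ⟨by omega, Or.inr (by omega)⟩

lemma RF_chain_comparable (F : RootedForest V) {v u : V}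
    (h1 : Relation.ReflTransGen (fun a b => F.parent a = some b) v u) :
    ∀ {w}, Relation.ReflTransGen (fun a b => F.parent a = some b) v w →
      Relation.ReflTransGen (fun a b => F.parent a = some b) u w ∨
      Relation.ReflTransGen (fun a b => F.parent a = some b) w u := by
  induction h1 using Relation.ReflTransGen.head_induction_on with
  | refl => intro w h2; exact Or.inl h2
  | head hstep htail ih =>
    intro w h2
    rcases h2.cases_head with rfl | ⟨c, hc, h2'⟩
    · exact Or.inr (Relation.ReflTransGen.head hstep htail)
    · rw [hstep] at hc
      obtain rfl := Option.some.inj hc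
      exact ih h2'

lemma RF_walk_min (F : RootedForest V) {G : SimpleGraph V}
    (helim : ∀ a b, G.Adj a b →
      Relation.ReflTransGen (fun a b => F.parent a = some b) a b ∨
      Relation.ReflTransGen (fun a b => F.parent a = some b) b a)
    {x y : V} (w : G.Walk x y) :
    ∃ m ∈ w.support, ∀ v ∈ w.support,
      Relation.ReflTransGen (fun a b => F.parent a = some b) v m := by
  induction w with
  | @nil a =>
    refine ⟨a, by simp, ?_⟩
    intro v hv
    rw [SimpleGraph.Walk.support_nil, List.mem_singleton] at hv
    subst hv
    exact Relation.ReflTransGen.refl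
  | @cons x c y h p ih =>
    obtain ⟨m, hm, hall⟩ := ih
    have hcm := hall c p.start_mem_support
    have hxm : (Relation.ReflTransGen (fun a b => F.parent a = some b) x m) ∨
        (Relation.ReflTransGen (fun a b => F.parent a = some b) m x) := by
      rcases helim x c h with hxc | hcx
      · exact Or.inl (hxc.trans hcm)
      · exact RF_chain_comparable F hcx hcm
    rcases hxm with hxm | hmx
    · refine ⟨m, by simp [hm], ?_⟩
      intro v hv
      rw [SimpleGraph.Walk.support_cons, List.mem_cons] at hv
      rcases hv with rfl | hv
      · exact hxm
      · exact hall v hv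
    · refine ⟨x, by simp, ?_⟩
      intro v hv
      rw [SimpleGraph.Walk.support_cons, List.mem_cons] at hv
      rcases hv with rfl | hv
      · exact Relation.ReflTransGen.refl
      · exact (hall v hv).trans hmx

lemma RF_path_bound [DecidableEq V] (F : RootedForest V) {G : SimpleGraph V}
    (helim : ∀ a b, G.Adj a b →
      Relation.ReflTransGen (fun a b => F.parent a = some b) a b ∨
      Relation.ReflTransGen (fun a b => F.parent a = some b) b a)
    (D : ℕ) (hD : ∀ v, F.vdepth v ≤ D) :
    ∀ (k : ℕ) (x y : V) (w : G.Walk x y), w.IsPath →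
      (∀ v ∈ w.support, D + 1 ≤ F.vdepth v + k) → w.support.length ≤ 2 ^ k - 1 := by
  intro k
  induction k with
  | zero =>
    intro x y w hw hv
    have h1 := hv x w.start_mem_support
    have h2 := hD x
    exfalso; omega
  | succ k ih =>
    intro x y w hw hv
    obtain ⟨m, hm, hall⟩ := RF_walk_min F helim w
    have hdm : D + 1 ≤ F.vdepth m + (k + 1) := hv m hm
    have h2k : 0 < 2 ^ k := pow_pos (by norm_num) k
    have key : ∀ (z : V) (B : G.Walk m z), B.IsPath →
        (∀ v ∈ B.support, Relation.ReflTransGen (fun a b => F.parent a = some b) v m) →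
        B.support.length ≤ 2 ^ k := by
      intro z B hBpath hBall
      cases B with
      | nil => simp only [SimpleGraph.Walk.support_nil, List.length_singleton]; omega
      | @cons _ c _ hadj B' =>
        rw [SimpleGraph.Walk.support_cons, List.length_cons]
        rw [SimpleGraph.Walk.cons_isPath_iff] at hBpath
        obtain ⟨hB'path, hmB'⟩ := hBpath
        have hlen : B'.support.length ≤ 2 ^ k - 1 := by
          refine ih c z B' hB'path ?_
          intro v hv
          have h1 : Relation.ReflTransGen (fun a b => F.parent a = some b) v m :=
            hBall v (by simp [hv])
          have h2 := RF_vdepth_chain F h1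
          have h3 : v ≠ m := fun h => hmB' (h ▸ hv)
          rcases h2.2 with h4 | h4
          · exact absurd h4.symm h3
          · omega
        omega
    have hAsup := SimpleGraph.Walk.support_takeUntil_subset w hm
    have hBsup := SimpleGraph.Walk.support_dropUntil_subset w hm
    have hB : (w.dropUntil m hm).support.length ≤ 2 ^ k :=
      key y (w.dropUntil m hm) (hw.dropUntil hm) (fun v hv => hall v (hBsup hv))
    have hA : (w.takeUntil m hm).support.length ≤ 2 ^ k := by
      have h1 : (w.takeUntil m hm).reverse.support.length ≤ 2 ^ k := by
        refine key x (w.takeUntil m hm).reverse ((hw.takeUntil hm).reverse) ?_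
        intro v hv
        rw [SimpleGraph.Walk.support_reverse, List.mem_reverse] at hv
        exact hall v (hAsup hv)
      rwa [SimpleGraph.Walk.support_reverse, List.length_reverse] at h1
    have hspec := w.take_spec hm
    have hsupp : w.support =
        (w.takeUntil m hm).support ++ ((w.dropUntil m hm).support).tail := by
      conv_lhs => rw [← hspec]
      exact SimpleGraph.Walk.support_append _ _
    have h1 : w.support.length =
        (w.takeUntil m hm).support.length + ((w.dropUntil m hm).support).tail.length := by
      rw [hsupp, List.length_append]
    have h2 : 0 < (w.dropUntil m hm).support.length :=
      List.length_pos_iff.mpr (SimpleGraph.Walk.support_ne_nil _)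
    have h3 : ((w.dropUntil m hm).support).tail.length = (w.dropUntil m hm).support.length - 1 :=
      List.length_tail
    have h4 : 2 ^ (k + 1) = 2 ^ k * 2 := pow_succ 2 k
    omega


variable [DecidableEq V] {G : SimpleGraph V}


lemma prefix_to_neighbor {v r : V} (w : G.Walk v r) (hvr : v ≠ r) :
    ∃ (u : V) (h : G.Adj u r) (w' : G.Walk v u),
      r ∉ w'.support ∧ ∀ x ∈ w'.support, x ∈ w.support := by
  induction w with
  | nil => exact absurd rfl hvr
  | @cons a b c h p ih =>
    rcases eq_or_ne b c with rfl | hbc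
    · refine ⟨a, h, SimpleGraph.Walk.nil, ?_, ?_⟩
      · rw [SimpleGraph.Walk.support_nil, List.mem_singleton]
        exact fun hh => hvr hh.symm
      · intro x hx
        rw [SimpleGraph.Walk.support_nil, List.mem_singleton] at hx
        subst hx; exact SimpleGraph.Walk.start_mem_support _
    · obtain ⟨u, hu, p', hrp', hsub⟩ := ih hbc
      refine ⟨u, hu, SimpleGraph.Walk.cons h p', ?_, ?_⟩
      · rw [SimpleGraph.Walk.support_cons, List.mem_cons]
        rintro (rfl | hh)
        · exact hvr rfl
        · exact hrp' hh
      · intro x hx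
        rw [SimpleGraph.Walk.support_cons, List.mem_cons] at hx
        rw [SimpleGraph.Walk.support_cons, List.mem_cons]
        rcases hx with rfl | hx
        · exact Or.inl rfl
        · exact Or.inr (hsub x hx)

lemma dfs_exists (G : SimpleGraph V) :
    ∀ (n : ℕ) (s : Finset V) (r : V), s.card ≤ n → r ∈ s →
    (∀ v ∈ s, ∃ w : G.Walk v r, ∀ x ∈ w.support, x ∈ s) →
    ∃ (p : V → Option V) (d : V → ℕ),
      (∀ v, v ∉ s → p v = none ∧ d v = 1) ∧
      (∀ v u, p v = some u → G.Adj v u ∧ u ∈ s) ∧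
      p r = none ∧
      (∀ v ∈ s, p v = none → v = r) ∧
      d r = 1 ∧
      (∀ v u, p v = some u → d v = d u + 1) ∧
      (∀ v ∈ s, Relation.ReflTransGen (fun a b => p a = some b) v r) ∧
      (∀ u v, u ∈ s → v ∈ s → G.Adj u v →
        Relation.ReflTransGen (fun a b => p a = some b) u v ∨
        Relation.ReflTransGen (fun a b => p a = some b) v u) ∧
      (∀ v ∈ s, ∃ w : G.Walk v r, w.IsPath ∧ w.length + 1 = d v ∧ ∀ x ∈ w.support, x ∈ s) := by
  intro n
  induction n with
  | zero =>
    intro s r hcard hr _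
    have := Finset.card_pos.mpr ⟨r, hr⟩
    omega
  | succ n ih =>
    intro s r hcard hr hconn
    classical
    by_cases hex : ∃ r' ∈ s, G.Adj r r'
    · obtain ⟨r', hr's, hadjrr'⟩ := hex
      have hr'r : r' ≠ r := hadjrr'.ne'
      set s' := s.erase r with hs'def
      have hr's' : r' ∈ s' := Finset.mem_erase.mpr ⟨hr'r, hr's⟩
      set C := s'.filter (fun v => ∃ w : G.Walk v r', ∀ x ∈ w.support, x ∈ s') with hCdef
      have hCs' : C ⊆ s' := Finset.filter_subset _ _
      have hCs : C ⊆ s := hCs'.trans (Finset.erase_subset _ _)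
      have hrC : r ∉ C := fun h => (Finset.mem_erase.mp (hCs' h)).1 rfl
      have hr'C : r' ∈ C := by
        refine Finset.mem_filter.mpr ⟨hr's', ⟨SimpleGraph.Walk.nil, ?_⟩⟩
        intro x hx
        rw [SimpleGraph.Walk.support_nil, List.mem_singleton] at hx
        subst hx; exact hr's'
      have hCclosed : ∀ v ∈ s', ∀ x, x ∈ C →
          (∃ w : G.Walk v x, ∀ y ∈ w.support, y ∈ s') → v ∈ C := by
        intro v hv x hx ⟨w, hw⟩
        obtain ⟨w2, hw2⟩ := (Finset.mem_filter.mp hx).2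
        refine Finset.mem_filter.mpr ⟨hv, ⟨w.append w2, ?_⟩⟩
        intro y hy
        rcases (SimpleGraph.Walk.mem_support_append_iff _ _).mp hy with hy | hy
        · exact hw y hy
        · exact hw2 y hy
      -- recursive call on C
      have hconn1 : ∀ v ∈ C, ∃ w : G.Walk v r', ∀ x ∈ w.support, x ∈ C := by
        intro v hv
        obtain ⟨w, hw⟩ := (Finset.mem_filter.mp hv).2
        refine ⟨w, fun x hx => ?_⟩
        refine Finset.mem_filter.mpr ⟨hw x hx, ⟨w.dropUntil x hx, ?_⟩⟩
        intro y hy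
        exact hw y (SimpleGraph.Walk.support_dropUntil_subset w hx hy)
      have hcard1 : C.card ≤ n := by
        have h1 := Finset.card_le_card hCs'
        have h2 : s'.card < s.card := by
          rw [hs'def]; exact Finset.card_erase_lt_of_mem hr
        omega
      obtain ⟨p₁, d₁, J1, J2, J3, J4, J5, J6, J7, J8, J9⟩ := ih C r' hcard1 hr'C hconn1
      -- recursive call on t = s \ C
      set t := s \ C with htdef
      have hrt : r ∈ t := Finset.mem_sdiff.mpr ⟨hr, hrC⟩
      have hconn2 : ∀ v ∈ t, ∃ w : G.Walk v r, ∀ x ∈ w.support, x ∈ t := by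
        intro v hv
        rcases eq_or_ne v r with rfl | hvr
        · refine ⟨SimpleGraph.Walk.nil, ?_⟩
          intro x hx
          rw [SimpleGraph.Walk.support_nil, List.mem_singleton] at hx
          subst hx; exact hrt
        · obtain ⟨hvs, hvC⟩ := Finset.mem_sdiff.mp hv
          obtain ⟨w, hw⟩ := hconn v hvs
          obtain ⟨u, hadj', w', hrw', hsub⟩ := prefix_to_neighbor w hvr
          have hw's' : ∀ x ∈ w'.support, x ∈ s' := by
            intro x hx
            exact Finset.mem_erase.mpr ⟨fun h => hrw' (h ▸ hx), hw x (hsub x hx)⟩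
          have hw'C : ∀ x ∈ w'.support, x ∉ C := by
            intro x hx hxC
            refine hvC (hCclosed v (hw's' v w'.start_mem_support) x hxC
              ⟨w'.takeUntil x hx, ?_⟩)
            intro y hy
            exact hw's' y (SimpleGraph.Walk.support_takeUntil_subset w' hx hy)
          refine ⟨w'.concat hadj', fun x hx => ?_⟩
          rw [SimpleGraph.Walk.support_concat, List.mem_append,
            List.mem_singleton] at hx
          rcases hx with hx | rfl
          · exact Finset.mem_sdiff.mpr
              ⟨(Finset.erase_subset _ _) (hw's' x hx), hw'C x hx⟩
          · exact hrt
      have hcard2 : t.card ≤ n := by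
        have hlt : t.card < s.card := by
          refine Finset.card_lt_card ?_
          rw [Finset.ssubset_iff_of_subset (Finset.sdiff_subset)]
          exact ⟨r', hr's, fun h => (Finset.mem_sdiff.mp h).2 hr'C⟩
        omega
      obtain ⟨p₂, d₂, K1, K2, K3, K4, K5, K6, K7, K8, K9⟩ := ih t r hcard2 hrt hconn2
      -- combine
      have hstep1 : ∀ a b, p₁ a = some b →
          (if a ∈ C then (if a = r' then some r else p₁ a) else p₂ a) = some b := by
        intro a b h
        have haC : a ∈ C := by
          by_contra h'; rw [(J1 a h').1] at h; simp at h
        have har' : a ≠ r' := by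
          rintro rfl; rw [J3] at h; simp at h
        rw [if_pos haC, if_neg har']; exact h
      have hstep2 : ∀ a b, p₂ a = some b →
          (if a ∈ C then (if a = r' then some r else p₁ a) else p₂ a) = some b := by
        intro a b h
        have hat : a ∈ t := by
          by_contra h'; rw [(K1 a h').1] at h; simp at h
        rw [if_neg (Finset.mem_sdiff.mp hat).2]; exact h
      have hlift1 : ∀ a b, Relation.ReflTransGen (fun a b => p₁ a = some b) a b →
          Relation.ReflTransGen (fun a b =>
            (if a ∈ C then (if a = r' then some r else p₁ a) else p₂ a) = some b) a b :=
        fun a b h => Relation.ReflTransGen.mono hstep1 _ _ h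
      have hlift2 : ∀ a b, Relation.ReflTransGen (fun a b => p₂ a = some b) a b →
          Relation.ReflTransGen (fun a b =>
            (if a ∈ C then (if a = r' then some r else p₁ a) else p₂ a) = some b) a b :=
        fun a b h => Relation.ReflTransGen.mono hstep2 _ _ h
      have hrootstep : (if r' ∈ C then (if r' = r' then some r else p₁ r') else p₂ r') = some r := by
        rw [if_pos hr'C, if_pos rfl]
      have hchain : ∀ v ∈ s, Relation.ReflTransGen (fun a b =>
          (if a ∈ C then (if a = r' then some r else p₁ a) else p₂ a) = some b) v r := by
        intro v hv
        by_cases hvC : v ∈ C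
        · exact (hlift1 _ _ (J7 v hvC)).trans (Relation.ReflTransGen.single hrootstep)
        · exact hlift2 _ _ (K7 v (Finset.mem_sdiff.mpr ⟨hv, hvC⟩))
      refine ⟨fun v => if v ∈ C then (if v = r' then some r else p₁ v) else p₂ v,
              fun v => if v ∈ C then d₁ v + 1 else d₂ v, ?_, ?_, ?_, ?_, ?_, ?_, ?_, ?_, ?_⟩
      · -- outside s
        intro v hv
        have hvC : v ∉ C := fun h => hv (hCs h)
        have hvt : v ∉ t := fun h => hv (Finset.mem_sdiff.mp h).1
        dsimp only
        exact ⟨by rw [if_neg hvC]; exact (K1 v hvt).1, by rw [if_neg hvC]; exact (K1 v hvt).2⟩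
      · -- parent edges are graph edges
        intro v u h
        dsimp only at h
        split_ifs at h with h1 h2
        · obtain rfl := Option.some.inj h
          exact ⟨h2 ▸ hadjrr'.symm, hr⟩
        · exact ⟨(J2 v u h).1, hCs (J2 v u h).2⟩
        · exact ⟨(K2 v u h).1, (Finset.mem_sdiff.mp (K2 v u h).2).1⟩
      · -- root
        dsimp only; rw [if_neg hrC]; exact K3
      · -- unique root
        intro v hv h
        dsimp only at h
        split_ifs at h with h1 h2
        · exact absurd (J4 v h1 h) h2
        · exact K4 v (Finset.mem_sdiff.mpr ⟨hv, h1⟩) h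
      · -- d r = 1
        dsimp only; rw [if_neg hrC]; exact K5
      · -- depth law
        intro v u h
        dsimp only at h ⊢
        split_ifs at h with h1 h2
        · obtain rfl := Option.some.inj h
          subst h2
          rw [if_pos h1, if_neg hrC, J5, K5]
        · have huC := (J2 v u h).2
          rw [if_pos h1, if_pos huC, J6 v u h]
        · have hut := (K2 v u h).2
          rw [if_neg h1, if_neg (Finset.mem_sdiff.mp hut).2, K6 v u h]
      · -- chain to root
        exact hchain
      · -- elimination property
        intro u v hu hv hadj
        by_cases huC : u ∈ C <;> by_cases hvC : v ∈ C
        · exact (J8 u v huC hvC hadj).imp (hlift1 _ _) (hlift1 _ _)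
        · have hvr : v = r := by
            by_contra hvr
            refine hvC (hCclosed v (Finset.mem_erase.mpr ⟨hvr, hv⟩) u huC
              ⟨SimpleGraph.Walk.cons hadj.symm SimpleGraph.Walk.nil, ?_⟩)
            intro y hy
            simp only [SimpleGraph.Walk.support_cons, SimpleGraph.Walk.support_nil,
              List.mem_cons, List.mem_singleton] at hy
            rcases hy with rfl | rfl | h
            · exact Finset.mem_erase.mpr ⟨hvr, hv⟩
            · exact hCs' huC
            · exact absurd h List.not_mem_nil
          subst hvr
          exact Or.inl (hchain u hu)
        · have hur : u = r := by
            by_contra hur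
            refine huC (hCclosed u (Finset.mem_erase.mpr ⟨hur, hu⟩) v hvC
              ⟨SimpleGraph.Walk.cons hadj SimpleGraph.Walk.nil, ?_⟩)
            intro y hy
            simp only [SimpleGraph.Walk.support_cons, SimpleGraph.Walk.support_nil,
              List.mem_cons, List.mem_singleton] at hy
            rcases hy with rfl | rfl | h
            · exact Finset.mem_erase.mpr ⟨hur, hu⟩
            · exact hCs' hvC
            · exact absurd h List.not_mem_nil
          subst hur
          exact Or.inr (hchain v hv)
        · exact (K8 u v (Finset.mem_sdiff.mpr ⟨hu, huC⟩) (Finset.mem_sdiff.mpr ⟨hv, hvC⟩)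
            hadj).imp (hlift2 _ _) (hlift2 _ _)
      · -- path realizing the depth
        intro v hv
        dsimp only
        by_cases hvC : v ∈ C
        · obtain ⟨w1, hw1path, hw1len, hw1sup⟩ := J9 v hvC
          have hrnot : r ∉ w1.reverse.support := by
            rw [SimpleGraph.Walk.support_reverse, List.mem_reverse]
            exact fun h => hrC (hw1sup r h)
          have hQpath : (SimpleGraph.Walk.cons hadjrr' w1.reverse).IsPath :=
            (SimpleGraph.Walk.cons_isPath_iff _ _).mpr ⟨hw1path.reverse, hrnot⟩
          refine ⟨(SimpleGraph.Walk.cons hadjrr' w1.reverse).reverse, hQpath.reverse, ?_, ?_⟩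
          · rw [SimpleGraph.Walk.length_reverse, SimpleGraph.Walk.length_cons,
              SimpleGraph.Walk.length_reverse, if_pos hvC]
            omega
          · intro x hx
            rw [SimpleGraph.Walk.support_reverse, List.mem_reverse,
              SimpleGraph.Walk.support_cons, List.mem_cons, SimpleGraph.Walk.support_reverse,
              List.mem_reverse] at hx
            rcases hx with rfl | hx
            · exact hr
            · exact hCs (hw1sup x hx)
        · obtain ⟨w2, hw2path, hw2len, hw2sup⟩ := K9 v (Finset.mem_sdiff.mpr ⟨hv, hvC⟩)
          refine ⟨w2, hw2path, ?_, fun x hx => (Finset.mem_sdiff.mp (hw2sup x hx)).1⟩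
          rw [if_neg hvC]
          exact hw2len
    · -- no neighbor of r in s : s = {r}
      have hsr : ∀ v ∈ s, v = r := by
        intro v hv
        by_contra hvr
        obtain ⟨w, hw⟩ := hconn v hv
        obtain ⟨u, hadj, w', hrw', hsub⟩ := prefix_to_neighbor w hvr
        refine hex ⟨u, hw u (hsub u w'.end_mem_support), hadj.symm⟩
      refine ⟨fun _ => none, fun _ => 1, fun v _ => ⟨rfl, rfl⟩,
        fun v u h => by simp at h, rfl, fun v hv _ => hsr v hv, rfl,
        fun v u h => by simp at h, fun v hv => by rw [hsr v hv], ?_, ?_⟩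
      · intro u v hu hv hadj
        rw [hsr u hu, hsr v hv] at hadj
        exact absurd hadj (G.irrefl)
      · intro v hv
        obtain rfl := hsr v hv
        refine ⟨SimpleGraph.Walk.nil, SimpleGraph.Walk.IsPath.nil, by simp, ?_⟩
        intro x hx
        rw [SimpleGraph.Walk.support_nil, List.mem_singleton] at hx
        subst hx; exact hv


end AuxLemmas

/-- Existence of a spanning elimination tree of bounded depth: every connected simple
graph `G` has, for every vertex `r`, a spanning tree rooted at `r` whose edges are
edges of `G`, which is an elimination tree of `G`, and whose depth is at most
`2 ^ td(G)`. -/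
theorem exists_spanning_elimination_tree {V : Type*} [Finite V]
    (G : SimpleGraph V) (hG : G.Connected) (r : V) :
    ∃ F : RootedForest V,
      (∀ v u : V, F.parent v = some u → G.Adj v u) ∧
      IsEliminationForest G F ∧
      (F.parent r = none ∧ ∀ v : V, F.parent v = none → v = r) ∧
      F.depth ≤ 2 ^ treedepth G := by
  classical
  have : Fintype V := Fintype.ofFinite V
  have : Nonempty V := ⟨r⟩
  have hconn : ∀ v ∈ (Finset.univ : Finset V), ∃ w : G.Walk v r,
      ∀ x ∈ w.support, x ∈ (Finset.univ : Finset V) := by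
    intro v _
    obtain ⟨w⟩ := hG.preconnected v r
    exact ⟨w, fun x _ => Finset.mem_univ x⟩
  obtain ⟨p, d, H1, H2, H3, H4, H5, H6, H7, H8, H9⟩ :=
    dfs_exists G (Finset.univ : Finset V).card Finset.univ r le_rfl (Finset.mem_univ r) hconn
  have hroot : ∀ v, p v = none → d v = 1 := by
    intro v h
    obtain rfl := H4 v (Finset.mem_univ v) h
    exact H5
  set F : RootedForest V := ⟨p, d, hroot, H6⟩ with hFdef
  have helim : IsEliminationForest G F := by
    intro u v hadj
    rcases H8 u v (Finset.mem_univ u) (Finset.mem_univ v) hadj with h | h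
    · exact Or.inr h
    · exact Or.inl h
  refine ⟨F, fun v u h => (H2 v u h).1, helim, ⟨H3, fun v h => H4 v (Finset.mem_univ v) h⟩, ?_⟩
  -- the treedepth is attained by some elimination forest F₀
  have hne : {dd | ∃ F' : RootedForest V, IsEliminationForest G F' ∧ F'.depth = dd}.Nonempty :=
    ⟨F.depth, F, helim, rfl⟩
  obtain ⟨F₀, hF₀elim, hF₀d⟩ := Nat.sInf_mem hne
  have hD : ∀ v, F₀.vdepth v ≤ F₀.depth := fun v =>
    le_csSup (Set.Finite.bddAbove (Set.finite_range _)) ⟨v, rfl⟩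
  have helim0 : ∀ a b, G.Adj a b →
      Relation.ReflTransGen (fun a b => F₀.parent a = some b) a b ∨
      Relation.ReflTransGen (fun a b => F₀.parent a = some b) b a := by
    intro a b h
    rcases hF₀elim a b h with h' | h'
    · exact Or.inr h'
    · exact Or.inl h'
  have hbound : ∀ v, d v ≤ 2 ^ F₀.depth := by
    intro v
    obtain ⟨w, hwpath, hwlen, -⟩ := H9 v (Finset.mem_univ v)
    have hb := RF_path_bound F₀ helim0 F₀.depth hD F₀.depth v r w hwpath
      (fun x _ => by have := RF_one_le_vdepth F₀ x; omega)
    have hsl := w.length_support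
    have h2 : 0 < 2 ^ F₀.depth := pow_pos (by norm_num) _
    omega
  have : F.depth ≤ 2 ^ F₀.depth := by
    refine csSup_le (Set.range_nonempty _) ?_
    rintro b ⟨v, rfl⟩
    exact hbound v
  rwa [hF₀d] at this
end
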